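/- arXiv:1901.07716 — 2 statements merged into one kernel-verified Lean document; each statement's English description precedes it below -/
import Mathlib

section
/- Let α, β, κ > 0, b = (b_1',…,b_n')' ∈ ℝ^{mn}, and z* = (Σ_{i=1}^n H_i)^{-1}(Σ_{i=1}^n b_i). Suppose (z̃_eq, v_eq) ∈ ℝ^{mn} × ℝ^{mn} satisfies the equilibrium equations −κβ (H^d (z̃_eq + 1_n ⊗ z*) − b) = α (L ⊗ I_m) v_eq and (L ⊗ I_m) z̃_eq = 0. Then z̃_eq = 0. -/
open Matrix Kronecker

/-!
Write `z̃_eq` as an `n × m` array of blocks. The equation `(L ⊗ I_m) z̃_eq = 0` says that every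
coordinate column lies in `ker L`, so by connectivity all blocks equal one vector `c`. Summing the
first equilibrium equation over the blocks kills the right-hand side, since `1ᵀ L = 0` by symmetry,
and leaves `(Σ H_i)(c + z*) = Σ b_i = (Σ H_i) z*`; as `Σ H_i` is invertible, `c = 0`.
-/

namespace Matrix

variable {ι κ R : Type*} [Fintype ι] [Semiring R]

variable (ι κ R) in
/-- `sumBlocks v = (1ᵀ ⊗ I) v`. -/
def sumBlocks : (ι × κ → R) →ₗ[R] κ → R where
  toFun v k := ∑ i, v (i, k)
  map_add' v w := by ext; simp [Finset.sum_add_distrib]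
  map_smul' c v := by ext; simp [Finset.mul_sum]

theorem sumBlocks_apply (v : ι × κ → R) (k : κ) : sumBlocks ι κ R v k = ∑ i, v (i, k) := rfl

theorem sumBlocks_uncurry (b : ι → κ → R) : sumBlocks ι κ R (fun p => b p.1 p.2) = ∑ i, b i := by
  ext k
  simp [sumBlocks_apply, Finset.sum_apply]

variable [Fintype κ]

theorem sumBlocks_blockDiagonal_mulVec [DecidableEq ι] (H : ι → Matrix κ κ R) (w : κ → R) :
    sumBlocks ι κ R ((of fun p q : ι × κ => if p.1 = q.1 then H p.1 p.2 q.2 else 0) *ᵥ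
      fun p => w p.2) = (∑ i, H i) *ᵥ w := by
  rw [sum_mulVec]
  ext k
  simp [sumBlocks_apply, Finset.sum_apply, mulVec, dotProduct, Fintype.sum_prod_type]

variable [DecidableEq κ]

theorem kronecker_one_mulVec_apply (M : Matrix ι ι R) (v : ι × κ → R) (i : ι) (k : κ) :
    ((M ⊗ₖ (1 : Matrix κ κ R)) *ᵥ v) (i, k) = (M *ᵥ fun j => v (j, k)) i := by
  simp [mulVec, dotProduct, Fintype.sum_prod_type, one_apply]

theorem sumBlocks_kronecker_one_mulVec {M : Matrix ι ι R} (hM : 1 ᵥ* M = 0) (v : ι × κ → R) :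
    sumBlocks ι κ R ((M ⊗ₖ (1 : Matrix κ κ R)) *ᵥ v) = 0 := by
  ext k
  simp only [sumBlocks_apply, kronecker_one_mulVec_apply, Pi.zero_apply]
  rw [← one_dotProduct, dotProduct_mulVec, hM, zero_dotProduct]

theorem exists_eq_comp_snd_of_kronecker_one_mulVec_eq_zero {M : Matrix ι ι R}
    (hM : ∀ x : ι → R, M *ᵥ x = 0 → ∃ c : R, x = fun _ => c) {z : ι × κ → R}
    (hz : (M ⊗ₖ (1 : Matrix κ κ R)) *ᵥ z = 0) :
    ∃ c : κ → R, z = fun p => c p.2 := by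
  have hcol (k : κ) : ∃ c : R, (fun j => z (j, k)) = fun _ => c :=
    hM _ <| funext fun i => by rw [← kronecker_one_mulVec_apply, hz]; rfl
  choose c hc using hcol
  exact ⟨c, funext fun p => congrFun (hc p.2) p.1⟩

end Matrix

theorem stmt7_general {n m : ℕ}
    (L : Matrix (Fin n) (Fin n) ℝ)
    (hLsym : L.PosSemidef)
    (hL1 : L *ᵥ (fun _ => (1 : ℝ)) = 0)
    (hLconn : ∀ x : Fin n → ℝ, L *ᵥ x = 0 → ∃ c : ℝ, x = fun _ => c)
    (H : Fin n → Matrix (Fin m) (Fin m) ℝ)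
    (hHsum : (∑ i, H i).PosDef)
    (α β κ : ℝ) (hβ : 0 < β) (hκ : 0 < κ)
    (Hd : Matrix (Fin n × Fin m) (Fin n × Fin m) ℝ)
    (hHd : Hd = Matrix.of fun p q => if p.1 = q.1 then H p.1 p.2 q.2 else 0)
    (bvec : Fin n → Fin m → ℝ)
    (b : Fin n × Fin m → ℝ) (hb : b = fun p => bvec p.1 p.2)
    (zstar : Fin m → ℝ) (hzstar : zstar = (∑ i, H i)⁻¹ *ᵥ (∑ i, bvec i))
    (zeq veq : Fin n × Fin m → ℝ)
    (heq1 : -((κ * β) • (Hd *ᵥ (zeq + fun p => zstar p.2) - b)) =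
      α • ((L ⊗ₖ (1 : Matrix (Fin m) (Fin m) ℝ)) *ᵥ veq))
    (heq2 : (L ⊗ₖ (1 : Matrix (Fin m) (Fin m) ℝ)) *ᵥ zeq = 0) :
    zeq = 0 := by
  obtain ⟨c, rfl⟩ := exists_eq_comp_snd_of_kronecker_one_mulVec_eq_zero hLconn heq2
  have hL1' : 1 ᵥ* L = 0 := by
    rw [← isHermitian_iff_isSymm.mp hLsym.1, vecMul_transpose]
    exact hL1
  have hzstar' : (∑ i, H i) *ᵥ zstar = ∑ i, bvec i := by
    rw [hzstar, mulVec_mulVec, mul_nonsing_inv _ ((isUnit_iff_isUnit_det _).mp hHsum.isUnit),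
      one_mulVec]
  have hsummed : (∑ i, H i) *ᵥ (c + zstar) = ∑ i, bvec i := by
    have h := congrArg (sumBlocks (Fin n) (Fin m) ℝ) heq1
    rw [map_smul, sumBlocks_kronecker_one_mulVec hL1', smul_zero, map_neg, map_smul, map_sub,
      neg_eq_zero, smul_eq_zero, hb, sumBlocks_uncurry, hHd,
      show ((fun p => c p.2) + fun p => zstar p.2) = fun p : Fin n × Fin m => (c + zstar) p.2
        from rfl,
      sumBlocks_blockDiagonal_mulVec, sub_eq_zero] at h
    exact h.resolve_left (by positivity)
  have hc : c + zstar = zstar :=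
    mulVec_injective_iff_isUnit.mpr hHsum.isUnit (hsummed.trans hzstar'.symm)
  rw [add_eq_right.mp hc]
  rfl

/-- If (z̃_eq, v_eq) satisfies the equilibrium equations
−κβ (H^d (z̃_eq + 1_n ⊗ z*) − b) = α (L ⊗ I_m) v_eq and (L ⊗ I_m) z̃_eq = 0,
where z* = (Σᵢ Hᵢ)⁻¹(Σᵢ bᵢ), then z̃_eq = 0. -/
theorem stmt7 {n m : ℕ}
    (L : Matrix (Fin n) (Fin n) ℝ)
    (hLsym : L.PosSemidef)
    (hL1 : L *ᵥ (fun _ => (1 : ℝ)) = 0)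
    (hLconn : ∀ x : Fin n → ℝ, L *ᵥ x = 0 → ∃ c : ℝ, x = fun _ => c)
    (H : Fin n → Matrix (Fin m) (Fin m) ℝ)
    (hH : ∀ i, (H i).PosSemidef)
    (hHsum : (∑ i, H i).PosDef)
    (α β κ : ℝ) (hα : 0 < α) (hβ : 0 < β) (hκ : 0 < κ)
    (Hd : Matrix (Fin n × Fin m) (Fin n × Fin m) ℝ)
    (hHd : Hd = Matrix.of fun p q => if p.1 = q.1 then H p.1 p.2 q.2 else 0)
    (bvec : Fin n → Fin m → ℝ)
    (b : Fin n × Fin m → ℝ) (hb : b = fun p => bvec p.1 p.2)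
    (zstar : Fin m → ℝ) (hzstar : zstar = (∑ i, H i)⁻¹ *ᵥ (∑ i, bvec i))
    (zeq veq : Fin n × Fin m → ℝ)
    (heq1 : -((κ * β) • (Hd *ᵥ (zeq + fun p => zstar p.2) - b)) =
      α • ((L ⊗ₖ (1 : Matrix (Fin m) (Fin m) ℝ)) *ᵥ veq))
    (heq2 : (L ⊗ₖ (1 : Matrix (Fin m) (Fin m) ℝ)) *ᵥ zeq = 0) :
    zeq = 0 :=
  stmt7_general L hLsym hL1 hLconn H hHsum α β κ hβ hκ Hd hHd bvec b hb zstar hzstar zeq veq heq1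
    heq2
end

section
/- Let α, β, κ, ϱ > 0 and set φ = ϱ + (1+α)/(αϱ). Let ξ ∈ ℝ^{1×n} be a left eigenvector of L associated with the zero eigenvalue having all entries strictly positive, Ξ = diag(ξ), b ∈ ℝ^{mn}, z* ∈ ℝ^m, and let (0, v_eq) be an equilibrium of the directed averaged system, i.e., −κβ (Ξ^{-1} ⊗ I_m)(H^d (1_n ⊗ z*) − b) = α (L ⊗ I_m) v_eq. Suppose z̃, v : ℝ → ℝ^{mn} are differentiable and solve z̃'(t) = −α (L ⊗ I_m)(φ z̃(t) + v(t)) − κβ (Ξ^{-1} ⊗ I_m)(H^d (z̃(t) + 1_n ⊗ z*) − b), v'(t) = (L ⊗ I_m) z̃(t). Then V(t) = (1/2) x(t)' ([[ϱ²+1, ϱ],[ϱ, 1]] ⊗ (Ξ ⊗ I_m)) x(t), with x(t) = [z̃(t); v(t) − v_eq], satisfies V'(t) = −x(t)' (P ⊗ (ΞL + L'Ξ) ⊗ I_m + Q ⊗ H^d) x(t), where P = (α/2)[[ϱ³+2ϱ+(α+1)/(αϱ), 1+ϱ²],[1+ϱ², ϱ]] and Q = κβ [[1+ϱ², ϱ/2],[ϱ/2,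 0]]. -/
/-!
Since `K` is symmetric, `V̇ = xᵀ K ẋ`. Write `x = [z; w]`. The equilibrium condition cancels the
constant terms `H^d (1 ⊗ z*) - b`, leaving `ż = -αφ L_m z - α L_m w - κβ (Ξ⁻¹ ⊗ I) H^d z`.
As `(Ξ ⊗ I)(Ξ⁻¹ ⊗ I) = I` and `(Ξ ⊗ I) L_m = ΞL ⊗ I`, expanding the `2 × 2` block forms leaves a
linear identity between the scalars `zᵀ(ΞL ⊗ I)z`, `zᵀ(ΞL ⊗ I)w`, `wᵀ(ΞL ⊗ I)z`, `wᵀ(ΞL ⊗ I)w`,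
`zᵀH^d z` and `wᵀH^d z = zᵀH^d w`, whose coefficients agree exactly when
`φ = ϱ + (1 + α)/(αϱ)`.
-/

open Matrix Kronecker Function

theorem Matrix.IsSymm.kronecker {R l n : Type*} [CommMagma R] {A : Matrix l l R}
    {B : Matrix n n R} (hA : A.IsSymm) (hB : B.IsSymm) : (A ⊗ₖ B).IsSymm := by
  rw [IsSymm, ← kroneckerMap_transpose, hA.eq, hB.eq]

theorem Matrix.isSymm_of_blocks {R n m : Type*} [Zero R] [DecidableEq n]
    (H : n → Matrix m m R) (hH : ∀ i, (H i).IsSymm) :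
    (Matrix.of fun p q : n × m => if p.1 = q.1 then H p.1 p.2 q.2 else 0).IsSymm := by
  refine IsSymm.ext fun ⟨i, k⟩ ⟨j, l⟩ => ?_
  by_cases hij : i = j
  · subst hij
    simpa using (hH i).apply k l
  · simp [hij, Ne.symm hij]

theorem HasDerivAt.uncurry_vecCons {ι : Type*} {f g : ℝ → ι → ℝ} {f' g' : ι → ℝ} {t : ℝ}
    (hf : HasDerivAt f f' t) (hg : HasDerivAt g g' t) :
    HasDerivAt (fun s => uncurry ![f s, g s]) (uncurry ![f', g']) t := by
  refine hasDerivAt_pi.mpr fun ⟨i, k⟩ => ?_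
  fin_cases i
  · exact hasDerivAt_pi.mp hf k
  · exact hasDerivAt_pi.mp hg k

section
variable {ι : Type*} [Fintype ι]

theorem HasDerivAt.dotProduct_mulVec {f : ℝ → ι → ℝ} {f' : ι → ℝ} {t : ℝ}
    (hf : HasDerivAt f f' t) (K : Matrix ι ι ℝ) :
    HasDerivAt (fun s => f s ⬝ᵥ (K *ᵥ f s)) (f' ⬝ᵥ (K *ᵥ f t) + f t ⬝ᵥ (K *ᵥ f')) t := by
  have hfi := hasDerivAt_pi.mp hf
  simp only [dotProduct, mulVec, ← Finset.sum_add_distrib]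
  exact HasDerivAt.fun_sum fun i _ =>
    (hfi i).mul (HasDerivAt.fun_sum fun j _ => (hfi j).const_mul (K i j))

theorem HasDerivAt.dotProduct_mulVec_of_isSymm {f : ℝ → ι → ℝ} {f' : ι → ℝ} {t : ℝ}
    (hf : HasDerivAt f f' t) {K : Matrix ι ι ℝ} (hK : K.IsSymm) :
    HasDerivAt (fun s => f s ⬝ᵥ (K *ᵥ f s)) (2 * (f t ⬝ᵥ (K *ᵥ f'))) t := by
  convert hf.dotProduct_mulVec K using 1
  rw [dotProduct_comm, ← vecMul_transpose, ← Matrix.dotProduct_mulVec, hK.eq]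
  ring

theorem uncurry_dotProduct_kronecker_mulVec (A : Matrix (Fin 2) (Fin 2) ℝ) (B : Matrix ι ι ℝ)
    (z w z' w' : ι → ℝ) :
    uncurry ![z, w] ⬝ᵥ ((A ⊗ₖ B) *ᵥ uncurry ![z', w']) =
      A 0 0 * (z ⬝ᵥ (B *ᵥ z')) + A 0 1 * (z ⬝ᵥ (B *ᵥ w')) +
        A 1 0 * (w ⬝ᵥ (B *ᵥ z')) + A 1 1 * (w ⬝ᵥ (B *ᵥ w')) := by
  simp only [dotProduct, mulVec, kroneckerMap_apply, Fintype.sum_prod_type, Fin.sum_univ_two,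
    uncurry_apply_pair, cons_val_zero, cons_val_one, Finset.mul_sum, mul_add,
    Finset.sum_add_distrib]
  simp only [mul_comm, mul_left_comm, mul_assoc]
  ring

theorem lyapunov_derivative_identity [DecidableEq ι] (B M X G : Matrix ι ι ℝ) (hBX : B * X = 1)
    (hG : G.IsSymm) {α ϱ φ : ℝ} (hα : α ≠ 0) (hϱ : ϱ ≠ 0) (hφ : φ = ϱ + (1 + α) / (α * ϱ))
    (c : ℝ) (z w : ι → ℝ) :
    uncurry ![z, w] ⬝ᵥ ((!![ϱ ^ 2 + 1, ϱ; ϱ, 1] ⊗ₖ B) *ᵥ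
      uncurry ![-(α * φ) • (M *ᵥ z) - α • (M *ᵥ w) - c • (X *ᵥ (G *ᵥ z)), M *ᵥ z]) =
    -(uncurry ![z, w] ⬝ᵥ
      ((((α / 2) • !![ϱ ^ 3 + 2 * ϱ + (α + 1) / (α * ϱ), 1 + ϱ ^ 2; 1 + ϱ ^ 2, ϱ]) ⊗ₖ
          (B * M + (B * M)ᵀ) + (c • !![1 + ϱ ^ 2, ϱ / 2; ϱ / 2, 0]) ⊗ₖ G) *ᵥ uncurry ![z, w])) := by
  have hGzw : z ⬝ᵥ (G *ᵥ w) = w ⬝ᵥ (G *ᵥ z) := by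
    rw [Matrix.dotProduct_mulVec, ← mulVec_transpose, hG.eq, dotProduct_comm]
  have hBMt (u u' : ι → ℝ) : u ⬝ᵥ ((B * M)ᵀ *ᵥ u') = u' ⬝ᵥ ((B * M) *ᵥ u) := by
    rw [Matrix.dotProduct_mulVec, vecMul_transpose, dotProduct_comm]
  simp only [add_mulVec, dotProduct_add, uncurry_dotProduct_kronecker_mulVec,
    mulVec_sub, mulVec_smul, dotProduct_sub, dotProduct_smul, mulVec_mulVec, ← Matrix.mul_assoc,
    hBX, one_mul, hBMt, hGzw, Matrix.smul_apply, of_apply, cons_val', cons_val_zero, cons_val_one,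
    empty_val', cons_val_fin_one, smul_eq_mul]
  subst hφ
  field_simp
  ring

end

theorem stmt12_general {n m : ℕ}
    (L : Matrix (Fin n) (Fin n) ℝ)
    (ξ : Fin n → ℝ) (hξpos : ∀ i, 0 < ξ i)
    (H : Fin n → Matrix (Fin m) (Fin m) ℝ)
    (hH : ∀ i, (H i).PosSemidef)
    (α β κ ϱ φ : ℝ) (hα : 0 < α) (hϱ : 0 < ϱ)
    (hφ : φ = ϱ + (1 + α) / (α * ϱ))
    (Hd : Matrix (Fin n × Fin m) (Fin n × Fin m) ℝ)
    (hHd : Hd = Matrix.of fun p q => if p.1 = q.1 then H p.1 p.2 q.2 else 0)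
    (Lm : Matrix (Fin n × Fin m) (Fin n × Fin m) ℝ)
    (hLm : Lm = L ⊗ₖ (1 : Matrix (Fin m) (Fin m) ℝ))
    (Xim : Matrix (Fin n × Fin m) (Fin n × Fin m) ℝ)
    (hXim : Xim = (Matrix.diagonal ξ)⁻¹ ⊗ₖ (1 : Matrix (Fin m) (Fin m) ℝ))
    (b : Fin n × Fin m → ℝ) (zstar : Fin m → ℝ)
    (veq : Fin n × Fin m → ℝ)
    (hveq : -((κ * β) • (Xim *ᵥ (Hd *ᵥ (fun p => zstar p.2) - b))) = α • (Lm *ᵥ veq))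
    (ztil v : ℝ → Fin n × Fin m → ℝ)
    (hz : ∀ t, HasDerivAt ztil
      (-(α • (Lm *ᵥ (φ • ztil t + v t))) -
        (κ * β) • (Xim *ᵥ (Hd *ᵥ (ztil t + fun p => zstar p.2) - b))) t)
    (hv : ∀ t, HasDerivAt v (Lm *ᵥ ztil t) t)
    (x : ℝ → Fin 2 × (Fin n × Fin m) → ℝ)
    (hx : ∀ t, x t = fun q => ![ztil t q.2, v t q.2 - veq q.2] q.1)
    (K : Matrix (Fin 2 × (Fin n × Fin m)) (Fin 2 × (Fin n × Fin m)) ℝ)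
    (hK : K = (!![ϱ ^ 2 + 1, ϱ; ϱ, 1] : Matrix (Fin 2) (Fin 2) ℝ) ⊗ₖ
      ((Matrix.diagonal ξ) ⊗ₖ (1 : Matrix (Fin m) (Fin m) ℝ)))
    (V : ℝ → ℝ) (hV : ∀ t, V t = (1 / 2) * (x t ⬝ᵥ (K *ᵥ x t)))
    (P Q : Matrix (Fin 2) (Fin 2) ℝ)
    (hP : P = (α / 2) • !![ϱ ^ 3 + 2 * ϱ + (α + 1) / (α * ϱ), 1 + ϱ ^ 2; 1 + ϱ ^ 2, ϱ])
    (hQ : Q = (κ * β) • !![1 + ϱ ^ 2, ϱ / 2; ϱ / 2, 0])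
    (S : Matrix (Fin 2 × (Fin n × Fin m)) (Fin 2 × (Fin n × Fin m)) ℝ)
    (hS : S = P ⊗ₖ (((Matrix.diagonal ξ) * L + Lᵀ * (Matrix.diagonal ξ)) ⊗ₖ
      (1 : Matrix (Fin m) (Fin m) ℝ)) + Q ⊗ₖ Hd) :
    ∀ t, HasDerivAt V (-(x t ⬝ᵥ (S *ᵥ x t))) t := by
  set B := diagonal ξ ⊗ₖ (1 : Matrix (Fin m) (Fin m) ℝ)
  have hx' : x = fun s => uncurry ![ztil s, v s - veq] := by
    funext s ⟨i, p⟩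
    rw [hx]
    fin_cases i <;> rfl
  have hBX : B * Xim = 1 := by
    have hdet : IsUnit (diagonal ξ).det := by
      rw [det_diagonal]
      exact isUnit_iff_ne_zero.mpr (Finset.prod_ne_zero_iff.mpr fun i _ => (hξpos i).ne')
    rw [hXim, ← mul_kronecker_mul, mul_nonsing_inv _ hdet, one_mul, one_kronecker_one]
  have hS' : S = P ⊗ₖ (B * Lm + (B * Lm)ᵀ) + Q ⊗ₖ Hd := by
    rw [hS, hLm, ← mul_kronecker_mul, one_mul, ← kroneckerMap_transpose, transpose_one,
      ← add_kronecker, transpose_mul, diagonal_transpose]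
  have hKsymm : K.IsSymm :=
    hK ▸ (IsSymm.ext fun i j => by fin_cases i <;> fin_cases j <;> rfl).kronecker
      ((isSymm_diagonal ξ).kronecker isSymm_one)
  have hHdsymm : Hd.IsSymm := hHd ▸ isSymm_of_blocks H fun i => isHermitian_iff_isSymm.mp (hH i).1
  intro t
  have hzdot : -(α • (Lm *ᵥ (φ • ztil t + v t))) -
      (κ * β) • (Xim *ᵥ (Hd *ᵥ (ztil t + fun p => zstar p.2) - b)) =
      -(α * φ) • (Lm *ᵥ ztil t) - α • (Lm *ᵥ (v t - veq)) -
        (κ * β) • (Xim *ᵥ (Hd *ᵥ ztil t)) := by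
    simp only [mulVec_add, mulVec_sub, mulVec_smul, smul_sub] at hveq ⊢
    linear_combination (norm := module) hveq
  have hxder : HasDerivAt x (uncurry ![_, Lm *ᵥ ztil t]) t :=
    hx' ▸ (hz t).uncurry_vecCons ((hv t).sub_const veq)
  rw [hzdot] at hxder
  have hV' := (hxder.dotProduct_mulVec_of_isSymm hKsymm).const_mul (1 / 2 : ℝ)
  rw [← funext hV] at hV'
  refine hV'.congr_deriv ?_
  rw [hx', hK, hS', hP, hQ, lyapunov_derivative_identity B Lm Xim Hd hBX hHdsymm hα.ne' hϱ.ne' hφ]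
  ring

/-- For the directed averaged system with φ = ϱ + (1+α)/(αϱ) and
equilibrium (0, v_eq), the Lyapunov function V(t) = (1/2) x(t)' K x(t) with
K = [[ϱ²+1, ϱ],[ϱ, 1]] ⊗ (Ξ ⊗ I_m) and x(t) = [z̃(t); v(t) − v_eq] satisfies
V'(t) = −x(t)' (P ⊗ (ΞL + L'Ξ) ⊗ I_m + Q ⊗ H^d) x(t), where
P = (α/2)[[ϱ³+2ϱ+(α+1)/(αϱ), 1+ϱ²],[1+ϱ², ϱ]] and Q = κβ[[1+ϱ², ϱ/2],[ϱ/2, 0]]. -/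
theorem stmt12 {n m : ℕ}
    (L : Matrix (Fin n) (Fin n) ℝ)
    (hL1 : L *ᵥ (fun _ => (1 : ℝ)) = 0)
    (hLconn : ∀ x : Fin n → ℝ, L *ᵥ x = 0 → ∃ c : ℝ, x = fun _ => c)
    (ξ : Fin n → ℝ) (hξL : ξ ᵥ* L = 0) (hξpos : ∀ i, 0 < ξ i)
    (H : Fin n → Matrix (Fin m) (Fin m) ℝ)
    (hH : ∀ i, (H i).PosSemidef)
    (α β κ ϱ φ : ℝ) (hα : 0 < α) (hβ : 0 < β) (hκ : 0 < κ) (hϱ : 0 < ϱ)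
    (hφ : φ = ϱ + (1 + α) / (α * ϱ))
    (Hd : Matrix (Fin n × Fin m) (Fin n × Fin m) ℝ)
    (hHd : Hd = Matrix.of fun p q => if p.1 = q.1 then H p.1 p.2 q.2 else 0)
    (Lm : Matrix (Fin n × Fin m) (Fin n × Fin m) ℝ)
    (hLm : Lm = L ⊗ₖ (1 : Matrix (Fin m) (Fin m) ℝ))
    (Xim : Matrix (Fin n × Fin m) (Fin n × Fin m) ℝ)
    (hXim : Xim = (Matrix.diagonal ξ)⁻¹ ⊗ₖ (1 : Matrix (Fin m) (Fin m) ℝ))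
    (b : Fin n × Fin m → ℝ) (zstar : Fin m → ℝ)
    (veq : Fin n × Fin m → ℝ)
    (hveq : -((κ * β) • (Xim *ᵥ (Hd *ᵥ (fun p => zstar p.2) - b))) = α • (Lm *ᵥ veq))
    (ztil v : ℝ → Fin n × Fin m → ℝ)
    (hz : ∀ t, HasDerivAt ztil
      (-(α • (Lm *ᵥ (φ • ztil t + v t))) -
        (κ * β) • (Xim *ᵥ (Hd *ᵥ (ztil t + fun p => zstar p.2) - b))) t)
    (hv : ∀ t, HasDerivAt v (Lm *ᵥ ztil t) t)
    (x : ℝ → Fin 2 × (Fin n × Fin m) → ℝ)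
    (hx : ∀ t, x t = fun q => ![ztil t q.2, v t q.2 - veq q.2] q.1)
    (K : Matrix (Fin 2 × (Fin n × Fin m)) (Fin 2 × (Fin n × Fin m)) ℝ)
    (hK : K = (!![ϱ ^ 2 + 1, ϱ; ϱ, 1] : Matrix (Fin 2) (Fin 2) ℝ) ⊗ₖ
      ((Matrix.diagonal ξ) ⊗ₖ (1 : Matrix (Fin m) (Fin m) ℝ)))
    (V : ℝ → ℝ) (hV : ∀ t, V t = (1 / 2) * (x t ⬝ᵥ (K *ᵥ x t)))
    (P Q : Matrix (Fin 2) (Fin 2) ℝ)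
    (hP : P = (α / 2) • !![ϱ ^ 3 + 2 * ϱ + (α + 1) / (α * ϱ), 1 + ϱ ^ 2; 1 + ϱ ^ 2, ϱ])
    (hQ : Q = (κ * β) • !![1 + ϱ ^ 2, ϱ / 2; ϱ / 2, 0])
    (S : Matrix (Fin 2 × (Fin n × Fin m)) (Fin 2 × (Fin n × Fin m)) ℝ)
    (hS : S = P ⊗ₖ (((Matrix.diagonal ξ) * L + Lᵀ * (Matrix.diagonal ξ)) ⊗ₖ
      (1 : Matrix (Fin m) (Fin m) ℝ)) + Q ⊗ₖ Hd) :
    ∀ t, HasDerivAt V (-(x t ⬝ᵥ (S *ᵥ x t))) t :=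
  stmt12_general L ξ hξpos H hH α β κ ϱ φ hα hϱ hφ Hd hHd Lm hLm Xim hXim b zstar veq hveq ztil v hz
    hv x hx K hK V hV P Q hP hQ S hS
end
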